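/- arXiv:2011.12038 — 2 statements merged into one kernel-verified Lean document; each statement's English description precedes it below -/
import Mathlib

section
/- If Γ is a strongly connected vertex-transitive digraph with dim(Γ) = 1, then Γ is weakly distance-transitive. -/
/-!  Common definitions for weak metric dimension of digraphs.

A digraph is modelled by a vertex type `V` together with an arc relation
`A : V → V → Prop` (simplicity is expressed by `Irreflexive A`). -/

/-- There is a directed walk of length `n` from `x` to `y`. -/
def walkLen {V : Type*} (A : V → V → Prop) : ℕ → V → V → Prop
  | 0 => fun x y => x = y
  | n + 1 => fun x y => ∃ z, A x z ∧ walkLen A n z y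

/-- `∂(x,y)`: the length of a shortest directed path from `x` to `y`. -/
noncomputable def ddist {V : Type*} (A : V → V → Prop) (x y : V) : ℕ :=
  sInf {n | walkLen A n x y}

/-- The two way distance `∂̃(x,y) = (∂(x,y), ∂(y,x))`. -/
noncomputable def twoDist {V : Type*} (A : V → V → Prop) (x y : V) : ℕ × ℕ :=
  (ddist A x y, ddist A y x)

/-- Strong connectivity: any vertex can be reached from any vertex by a directed walk. -/
def IsStronglyConnected {V : Type*} (A : V → V → Prop) : Prop :=
  ∀ x y : V, ∃ n, walkLen A n x y

/-- `S` is a weakly resolving set: distinct vertices have different tuples of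
two way distances from the vertices of `S`. -/
def IsWeaklyResolving {V : Type*} (A : V → V → Prop) (S : Set V) : Prop :=
  ∀ u v : V, (∀ w ∈ S, twoDist A w u = twoDist A w v) → u = v

/-- The weak metric dimension: minimum cardinality of a weakly resolving set. -/
noncomputable def wdim {V : Type*} [Fintype V] (A : V → V → Prop) : ℕ :=
  sInf {k | ∃ S : Finset V, S.card = k ∧ IsWeaklyResolving A ↑S}

/-- The diameter: the maximum of `∂(x,y)` over all ordered pairs of vertices. -/
noncomputable def diam {V : Type*} [Fintype V] (A : V → V → Prop) : ℕ :=
  sSup {m | ∃ x y : V, ddist A x y = m}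

/-- `f(n,d)`: the least positive integer `k` with `k + d^(2k) ≥ n`. -/
noncomputable def fnd (n d : ℕ) : ℕ :=
  sInf {k | 0 < k ∧ n ≤ k + d ^ (2 * k)}

/-- An isomorphism from `(V, A)` onto `(W, B)` exists. -/
def IsIsoTo {V W : Type*} (A : V → V → Prop) (B : W → W → Prop) : Prop :=
  ∃ e : V ≃ W, ∀ x y, A x y ↔ B (e x) (e y)

/-- The digraph of Example 2.3: vertices `v_1, …, v_n` are the elements
`0, …, n-1` of `Fin n` (so `v_i` is `i - 1`). -/
def egArc (n d : ℕ) : Fin n → Fin n → Prop := fun x y =>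
  (x.val = n - 1 ∧ y.val ≤ n - d) ∨
  (x.val ≤ n - d ∧ y.val = n - d + 1) ∨
  (n - d + 1 ≤ x.val ∧ x.val ≤ n - 2 ∧ y.val = x.val + 1)

/-- The `r`-th (0-based) coordinate of the tuple `v_{j+1}` in Construction 2.4;
it lies in `{1, …, d}` and `j = Σ_r (coord r - 1) d^r`. -/
def gcoord (d j r : ℕ) : ℕ := j / d ^ r % d + 1

/-- The arc relation of Construction 2.4, with the `u`-vertices `Fin k` on the left
and the `v`-vertices `Fin m` on the right of the sum. -/
def gammaArcKM (d k : ℕ) {m : ℕ} : Fin k ⊕ Fin m → Fin k ⊕ Fin m → Prop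
  | .inl _, .inl _ => False
  | .inl i, .inr j => gcoord d j.val (2 * i.val) = 1
  | .inr j, .inl i => gcoord d j.val (2 * i.val + 1) = 1
  | .inr j, .inr l => j ≠ l ∧ ∀ r < k,
      gcoord d l.val (2 * r) ≤ gcoord d j.val (2 * r) + 1 ∧
      gcoord d j.val (2 * r + 1) ≤ gcoord d l.val (2 * r + 1) + 1

/-- The arc relation of `Γ̄`: `Γ` of Construction 2.4 together with symmetric arcs
between any two distinct `u`-vertices. -/
def gammaBarArcKM (d k : ℕ) {m : ℕ} : Fin k ⊕ Fin m → Fin k ⊕ Fin m → Prop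
  | .inl i, .inl i' => i ≠ i'
  | x, y => gammaArcKM d k x y

/-- The directed cycle of length `m` on `Fin m`. -/
def cycArc (m : ℕ) [NeZero m] : Fin m → Fin m → Prop := fun x y => y = x + 1

/-- `σ` is an automorphism of the digraph `(V, A)`. -/
def IsDigraphAuto {V : Type*} (A : V → V → Prop) (σ : V ≃ V) : Prop :=
  ∀ a b, A a b ↔ A (σ a) (σ b)

/-- Vertex-transitivity. -/
def IsVertexTransitive {V : Type*} (A : V → V → Prop) : Prop :=
  ∀ x y : V, ∃ σ : V ≃ V, IsDigraphAuto A σ ∧ σ x = y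

/-- Weak distance-transitivity. -/
def IsWeaklyDistanceTransitive {V : Type*} (A : V → V → Prop) : Prop :=
  ∀ x y x' y' : V, twoDist A x y = twoDist A x' y' →
    ∃ σ : V ≃ V, IsDigraphAuto A σ ∧ σ x = x' ∧ σ y = y'

/-- Weak distance-regularity. -/
noncomputable def IsWeaklyDistanceRegular {V : Type*} (A : V → V → Prop) : Prop :=
  ∀ i j : ℕ × ℕ, (∃ a b : V, twoDist A a b = i) → (∃ a b : V, twoDist A a b = j) →
    ∀ x y x' y' : V, twoDist A x y = twoDist A x' y' →
      Set.ncard {z : V | twoDist A x z = i ∧ twoDist A z y = j} =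
      Set.ncard {z : V | twoDist A x' z = i ∧ twoDist A z y' = j}

/-- The complete digraph `K_t`. -/
def Krel (t : ℕ) : Fin t → Fin t → Prop := fun x y => x ≠ y

/-- The null digraph `K̄_t`. -/
def Nrel (t : ℕ) : Fin t → Fin t → Prop := fun _ _ => False

/-- The directed path `P_2` of length `1`. -/
def P2rel : Fin 2 → Fin 2 → Prop := fun x y => x = 0 ∧ y = 1

/-- The digraph `G_1` on `{0,1,2}` with arcs `(0,1),(1,2),(2,1),(2,0)`. -/
def G1rel : Fin 3 → Fin 3 → Prop := fun x y =>
  (x = 0 ∧ y = 1) ∨ (x = 1 ∧ y = 2) ∨ (x = 2 ∧ y = 1) ∨ (x = 2 ∧ y = 0)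

/-- The digraph `G_2` on `{0,1,2}` with arcs `(0,1),(1,0),(1,2),(2,1),(2,0)`. -/
def G2rel : Fin 3 → Fin 3 → Prop := fun x y =>
  (x = 0 ∧ y = 1) ∨ (x = 1 ∧ y = 0) ∨ (x = 1 ∧ y = 2) ∨ (x = 2 ∧ y = 1) ∨ (x = 2 ∧ y = 0)

/-- The generalized lexicographic product `G[H₀, H₁, H₂]` for a digraph `G` on `{0,1,2}`. -/
def glex3 {α β γ : Type*} (G : Fin 3 → Fin 3 → Prop)
    (H0 : α → α → Prop) (H1 : β → β → Prop) (H2 : γ → γ → Prop) :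
    α ⊕ β ⊕ γ → α ⊕ β ⊕ γ → Prop
  | .inl x, .inl y => H0 x y
  | .inl _, .inr (.inl _) => G 0 1
  | .inl _, .inr (.inr _) => G 0 2
  | .inr (.inl _), .inl _ => G 1 0
  | .inr (.inl x), .inr (.inl y) => H1 x y
  | .inr (.inl _), .inr (.inr _) => G 1 2
  | .inr (.inr _), .inl _ => G 2 0
  | .inr (.inr _), .inr (.inl _) => G 2 1
  | .inr (.inr x), .inr (.inr y) => H2 x y

/-- A clique in a digraph: the two way distance between any two distinct
vertices of `S` is `(1,1)`. -/
noncomputable def DClique {V : Type*} (A : V → V → Prop) (S : Set V) : Prop :=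
  ∀ u ∈ S, ∀ v ∈ S, u ≠ v → twoDist A u v = (1, 1)

/-- An independent set in a digraph: no arcs inside `R`. -/
def DIndependent {V : Type*} (A : V → V → Prop) (R : Set V) : Prop :=
  ∀ u ∈ R, ∀ v ∈ R, ¬ A u v


/-!
Automorphisms preserve two way distances, so under vertex-transitivity the image of a
resolving vertex is again resolving, and every single vertex resolves the digraph. Given
`∂̃(x,y) = ∂̃(x',y')`, take an automorphism `σ` with `σ x = x'`; then
`∂̃(x', σ y) = ∂̃(x, y) = ∂̃(x', y')`, and since `x'` resolves, `σ y = y'`.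
-/

namespace IsDigraphAuto

variable {V : Type*} {A : V → V → Prop} {σ : V ≃ V}

lemma walkLen_iff (hσ : IsDigraphAuto A σ) (n : ℕ) (x y : V) :
    walkLen A n x y ↔ walkLen A n (σ x) (σ y) := by
  induction n generalizing x with
  | zero => exact σ.apply_eq_iff_eq.symm
  | succ n ih => exact σ.exists_congr fun z => and_congr (hσ x z) (ih z)

lemma ddist_apply (hσ : IsDigraphAuto A σ) (x y : V) :
    ddist A (σ x) (σ y) = ddist A x y :=
  congrArg sInf (Set.ext fun n => (hσ.walkLen_iff n x y).symm)

lemma twoDist_apply (hσ : IsDigraphAuto A σ) (x y : V) :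
    twoDist A (σ x) (σ y) = twoDist A x y := by
  simp only [twoDist, hσ.ddist_apply]

end IsDigraphAuto

section

variable {V : Type*} {A : V → V → Prop}

lemma IsWeaklyResolving.image_of_isDigraphAuto {S : Set V} (hS : IsWeaklyResolving A S)
    {σ : V ≃ V} (hσ : IsDigraphAuto A σ) : IsWeaklyResolving A (σ '' S) := by
  intro u v huv
  suffices σ.symm u = σ.symm v from σ.symm.injective this
  refine hS _ _ fun w hw => ?_
  have hσw := huv (σ w) (Set.mem_image_of_mem σ hw)
  rwa [← σ.apply_symm_apply u, ← σ.apply_symm_apply v, hσ.twoDist_apply,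
    hσ.twoDist_apply] at hσw

lemma exists_isWeaklyResolving_singleton_of_wdim_eq_one [Fintype V] (h : wdim A = 1) :
    ∃ w, IsWeaklyResolving A {w} := by
  have hne : {k | ∃ S : Finset V, S.card = k ∧ IsWeaklyResolving A ↑S}.Nonempty :=
    Set.nonempty_iff_ne_empty.mpr fun he => by simp [wdim, he] at h
  obtain ⟨S, hcard, hS⟩ : 1 ∈ {k | ∃ S : Finset V, S.card = k ∧ IsWeaklyResolving A ↑S} :=
    h ▸ Nat.sInf_mem hne
  obtain ⟨w, rfl⟩ := Finset.card_eq_one.mp hcard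
  exact ⟨w, by simpa using hS⟩

lemma IsVertexTransitive.isWeaklyResolving_singleton (hvt : IsVertexTransitive A) {w : V}
    (hw : IsWeaklyResolving A {w}) (x : V) : IsWeaklyResolving A {x} := by
  obtain ⟨σ, hσ, rfl⟩ := hvt w x
  simpa using hw.image_of_isDigraphAuto hσ

lemma IsVertexTransitive.isWeaklyDistanceTransitive (hvt : IsVertexTransitive A)
    (hres : ∀ x : V, IsWeaklyResolving A {x}) : IsWeaklyDistanceTransitive A := by
  intro x y x' y' hxy
  obtain ⟨σ, hσ, rfl⟩ := hvt x x'
  refine ⟨σ, hσ, rfl, hres (σ x) _ _ fun w hw => ?_⟩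
  rw [Set.mem_singleton_iff.mp hw, hσ.twoDist_apply, hxy]

end

theorem dim_one_vt_implies_wdt_general {V : Type*} [Fintype V] (A : V → V → Prop)
    (hvt : IsVertexTransitive A) (hdim : wdim A = 1) :
    IsWeaklyDistanceTransitive A := by
  obtain ⟨w, hw⟩ := exists_isWeaklyResolving_singleton_of_wdim_eq_one hdim
  exact hvt.isWeaklyDistanceTransitive (hvt.isWeaklyResolving_singleton hw)

/-- Lemma 3.7. A `1`-dimensional vertex-transitive digraph is
weakly distance-transitive. -/
theorem dim_one_vt_implies_wdt {V : Type*} [Fintype V] (A : V → V → Prop)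
    (hirr : Irreflexive A) (hsc : IsStronglyConnected A)
    (hvt : IsVertexTransitive A) (hdim : wdim A = 1) :
    IsWeaklyDistanceTransitive A :=
  dim_one_vt_implies_wdt_general A hvt hdim
end

section
/- For i ∈ {1, 2} and positive integers t, s, the generalized lexicographic product G_i[K_1, K_t, K_s] has weak metric dimension s + t − 1. -/
/-! Write `a` for the vertex of `K_1`, `b_i` for those of `K_t` and `c_j` for those of `K_s`.
Two vertices of the same complete block are twins, so swapping them is an automorphism, which
must move some vertex of a weakly resolving set: such a set misses at most one `b_i` and at most
one `c_j`. Every vertex other than `a`, `b_i`, `c_j` is at two way distance `(1, 1)` from both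
`b_i` and `c_j`, while `∂(a, b_i) = 1 ≠ ∂(a, c_j)`; so a set missing some `b_i` and some `c_j`
contains `a`, and has at least `s + t - 1` elements. Conversely, the complement of `{b_0, c_0}` is
weakly resolving, since `a` separates `b_0` from `c_0` and any two distinct vertices are joined by
an arc. -/

open Finset

section Digraph

variable {V : Type*} {A : V → V → Prop}

theorem walkLen_one {x y : V} : walkLen A 1 x y ↔ A x y :=
  ⟨fun ⟨_, hxz, hzy⟩ => hzy ▸ hxz, fun h => ⟨y, h, rfl⟩⟩

theorem ddist_self (x : V) : ddist A x x = 0 :=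
  Nat.sInf_eq_zero.mpr (Or.inl rfl)

theorem ddist_eq_one_iff {x y : V} : ddist A x y = 1 ↔ x ≠ y ∧ A x y := by
  constructor
  · intro h
    have hne : {n | walkLen A n x y}.Nonempty := by
      by_contra hemp
      rw [Set.not_nonempty_iff_eq_empty] at hemp
      simp [ddist, hemp] at h
    have hmem := Nat.sInf_mem hne
    refine ⟨fun hxy => ?_, walkLen_one.mp (h ▸ hmem)⟩
    subst hxy
    simp [ddist_self] at h
  · rintro ⟨hxy, hA⟩
    refine le_antisymm (Nat.sInf_le (walkLen_one.mpr hA)) (Nat.one_le_iff_ne_zero.mpr ?_)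
    rw [ddist, Ne, Nat.sInf_eq_zero, not_or]
    exact ⟨hxy, Set.nonempty_iff_ne_empty.mp ⟨1, walkLen_one.mpr hA⟩⟩

theorem twoDist_self (x : V) : twoDist A x x = (0, 0) := by
  simp [twoDist, ddist_self]

theorem twoDist_eq_one_one {x y : V} (hxy : x ≠ y) (h : A x y) (h' : A y x) :
    twoDist A x y = (1, 1) := by
  simp [twoDist, ddist_eq_one_iff, hxy, hxy.symm, h, h']

theorem twoDist_ne_twoDist_self_of_adj {x y : V} (hxy : x ≠ y) (h : A x y ∨ A y x) :
    twoDist A x y ≠ twoDist A x x := by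
  rw [twoDist_self]
  rcases h with h | h
  · simp [twoDist, ddist_eq_one_iff.mpr ⟨hxy, h⟩]
  · simp [twoDist, ddist_eq_one_iff.mpr ⟨hxy.symm, h⟩]

theorem IsDigraphAuto.walkLen_apply_iff {σ : V ≃ V} (hσ : IsDigraphAuto A σ) (n : ℕ)
    (x y : V) : walkLen A n (σ x) (σ y) ↔ walkLen A n x y := by
  induction n generalizing x with
  | zero => exact σ.injective.eq_iff
  | succ n ih =>
    refine ⟨fun ⟨z, hxz, hzy⟩ => ⟨σ.symm z, ?_, ?_⟩, fun ⟨z, hxz, hzy⟩ =>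
      ⟨σ z, (hσ x z).mp hxz, (ih z).mpr hzy⟩⟩
    · rwa [hσ, σ.apply_symm_apply]
    · rwa [← ih, σ.apply_symm_apply]

theorem IsDigraphAuto.twoDist_apply_s16 {σ : V ≃ V} (hσ : IsDigraphAuto A σ) (x y : V) :
    twoDist A (σ x) (σ y) = twoDist A x y := by
  simp only [twoDist, ddist, hσ.walkLen_apply_iff]

theorem isDigraphAuto_swap [DecidableEq V] {u v : V} (hloop : A u u ↔ A v v)
    (hadj : A u v ↔ A v u)
    (hout : ∀ w, w ≠ u → w ≠ v → (A u w ↔ A v w))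
    (hin : ∀ w, w ≠ u → w ≠ v → (A w u ↔ A w v)) :
    IsDigraphAuto A (Equiv.swap u v) := by
  intro x y
  simp only [Equiv.swap_apply_def]
  split_ifs <;> subst_vars <;> grind

theorem IsWeaklyResolving.eq_refl_of_isDigraphAuto {S : Set V} (hS : IsWeaklyResolving A S)
    {σ : V ≃ V} (hσ : IsDigraphAuto A σ) (hfix : ∀ w ∈ S, σ w = w) : σ = Equiv.refl V :=
  Equiv.ext fun x => hS _ _ fun w hw => by
    conv_lhs => rw [← hfix w hw]
    exact hσ.twoDist_apply_s16 w x

theorem IsWeaklyResolving.mem_or_mem_of_isDigraphAuto_swap [DecidableEq V] {S : Set V}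
    (hS : IsWeaklyResolving A S) {u v : V} (huv : u ≠ v)
    (hσ : IsDigraphAuto A (Equiv.swap u v)) : u ∈ S ∨ v ∈ S := by
  by_contra! h
  refine huv (Equiv.swap_eq_refl_iff.mp (hS.eq_refl_of_isDigraphAuto hσ fun w hw => ?_))
  exact Equiv.swap_apply_of_ne_of_ne (ne_of_mem_of_not_mem hw h.1)
    (ne_of_mem_of_not_mem hw h.2)

theorem IsWeaklyResolving.exists_mem_twoDist_ne {S : Set V} (hS : IsWeaklyResolving A S)
    {u v : V} (huv : u ≠ v) : ∃ w ∈ S, twoDist A w u ≠ twoDist A w v := by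
  by_contra! h
  exact huv (hS u v h)

theorem isWeaklyResolving_of_notMem_eq_or_eq (hadj : ∀ x y, x ≠ y → A x y ∨ A y x)
    {S : Set V} {u v w : V} (hcover : ∀ x ∉ S, x = u ∨ x = v) (hw : w ∈ S)
    (hsep : twoDist A w u ≠ twoDist A w v) : IsWeaklyResolving A S := by
  intro x y h
  by_contra hxy
  -- `ddist` is also `0` between mutually unreachable vertices: `hadj` rules that out.
  have hsep_self : ∀ z z', z ≠ z' → twoDist A z z ≠ twoDist A z z' :=
    fun z z' hzz' => (twoDist_ne_twoDist_self_of_adj hzz' (hadj z z' hzz')).symm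
  by_cases hx : x ∈ S
  · exact hsep_self x y hxy (h x hx)
  by_cases hy : y ∈ S
  · exact hsep_self y x (Ne.symm hxy) (h y hy).symm
  rcases hcover x hx with rfl | rfl <;> rcases hcover y hy with rfl | rfl
  · exact hxy rfl
  · exact hsep (h w hw)
  · exact hsep (h w hw).symm
  · exact hxy rfl

theorem wdim_eq_of_isWeaklyResolving [Fintype V] {S : Finset V}
    (hS : IsWeaklyResolving A ↑S) (hmin : ∀ T : Finset V, IsWeaklyResolving A ↑T → #S ≤ #T) :
    wdim A = #S :=
  le_antisymm (Nat.sInf_le ⟨S, rfl, hS⟩) (le_csInf ⟨_, S, rfl, hS⟩ fun _ ⟨T, hT, hTres⟩ =>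
    hT ▸ hmin T hTres)

end Digraph

theorem Finset.card_sub_one_le_of_forall_mem_or_mem {α : Type*} [Fintype α] {T : Finset α}
    (h : ∀ x y, x ≠ y → x ∈ T ∨ y ∈ T) : Fintype.card α - 1 ≤ #T := by
  classical
  have hcompl : #Tᶜ ≤ 1 := Finset.card_le_one.mpr fun x hx y hy => by
    by_contra hxy
    rw [mem_compl] at hx hy
    exact (h x y hxy).elim hx hy
  have := T.card_add_card_compl
  omega

theorem Finset.card_add_card_sub_one_le_of_forall_mem_or_mem {α β γ : Type*} [Fintype β]
    [Fintype γ] {S : Finset (α ⊕ β ⊕ γ)}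
    (hβ : ∀ i i', i ≠ i' → .inr (.inl i) ∈ S ∨ .inr (.inl i') ∈ S)
    (hγ : ∀ j j', j ≠ j' → .inr (.inr j) ∈ S ∨ .inr (.inr j') ∈ S)
    (hβγ : ∀ i j, (∃ x, .inl x ∈ S) ∨ .inr (.inl i) ∈ S ∨ .inr (.inr j) ∈ S) :
    Fintype.card β + Fintype.card γ - 1 ≤ #S := by
  rw [← card_toLeft_add_card_toRight, ← card_toLeft_add_card_toRight (u := S.toRight)]
  have hB := card_sub_one_le_of_forall_mem_or_mem (T := S.toRight.toLeft) (by simpa using hβ)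
  have hC := card_sub_one_le_of_forall_mem_or_mem (T := S.toRight.toRight) (by simpa using hγ)
  by_cases hBfull : ∀ i, .inr (.inl i) ∈ S
  · have : S.toRight.toLeft = univ := eq_univ_of_forall (by simpa using hBfull)
    rw [this, card_univ]
    omega
  by_cases hCfull : ∀ j, .inr (.inr j) ∈ S
  · have : S.toRight.toRight = univ := eq_univ_of_forall (by simpa using hCfull)
    rw [this, card_univ]
    omega
  obtain ⟨i, hi⟩ := not_forall.mp hBfull
  obtain ⟨j, hj⟩ := not_forall.mp hCfull
  obtain ⟨x, hx⟩ : ∃ x, .inl x ∈ S := by simpa [hi, hj] using hβγ i j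
  have hxS : 0 < #S.toLeft := card_pos.mpr ⟨x, mem_toLeft.mpr hx⟩
  omega

section Glex3

variable {α β γ : Type*} {G : Fin 3 → Fin 3 → Prop} {H0 : α → α → Prop}

theorem isDigraphAuto_swap_glex3_Krel_mid [DecidableEq α] [DecidableEq γ] {t : ℕ}
    {H2 : γ → γ → Prop} (i i' : Fin t) :
    IsDigraphAuto (glex3 G H0 (Krel t) H2) (Equiv.swap (.inr (.inl i)) (.inr (.inl i'))) := by
  apply isDigraphAuto_swap
  · simp [glex3, Krel]
  · simp [glex3, Krel, eq_comm]
  · rintro (x | k | k) h h' <;> simp_all [glex3, Krel, eq_comm]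
  · rintro (x | k | k) h h' <;> simp_all [glex3, Krel]

theorem isDigraphAuto_swap_glex3_Krel_right [DecidableEq α] [DecidableEq β] {s : ℕ}
    {H1 : β → β → Prop} (j j' : Fin s) :
    IsDigraphAuto (glex3 G H0 H1 (Krel s)) (Equiv.swap (.inr (.inr j)) (.inr (.inr j'))) := by
  apply isDigraphAuto_swap
  · simp [glex3, Krel]
  · simp [glex3, Krel, eq_comm]
  · rintro (x | k | k) h h' <;> simp_all [glex3, Krel, eq_comm]
  · rintro (x | k | k) h h' <;> simp_all [glex3, Krel]

theorem glex3_Krel_adj_or_adj (h01 : G 0 1) (h12 : G 1 2) (h20 : G 2 0) {r t s : ℕ}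
    (x y : Fin r ⊕ Fin t ⊕ Fin s) (hxy : x ≠ y) :
    glex3 G (Krel r) (Krel t) (Krel s) x y ∨ glex3 G (Krel r) (Krel t) (Krel s) y x := by
  rcases x with x | x | x <;> rcases y with y | y | y <;> simp_all [glex3, Krel]

theorem twoDist_glex3_inl_mid_ne_inl_right (h01 : G 0 1) (h02 : ¬ G 0 2)
    {H1 : β → β → Prop} {H2 : γ → γ → Prop} (x : α) (i : β) (j : γ) :
    twoDist (glex3 G H0 H1 H2) (.inl x) (.inr (.inl i)) ≠
      twoDist (glex3 G H0 H1 H2) (.inl x) (.inr (.inr j)) := by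
  intro h
  have h1 : ddist (glex3 G H0 H1 H2) (.inl x) (.inr (.inl i)) = 1 :=
    ddist_eq_one_iff.mpr ⟨by simp, h01⟩
  have h2 : ddist (glex3 G H0 H1 H2) (.inl x) (.inr (.inr j)) ≠ 1 :=
    fun h => h02 (ddist_eq_one_iff.mp h).2
  exact h2 ((congrArg Prod.fst h).symm.trans h1)

theorem twoDist_glex3_Krel_inr (h12 : G 1 2) (h21 : G 2 1) {t s : ℕ}
    {x y : Fin t ⊕ Fin s} (hxy : x ≠ y) :
    twoDist (glex3 G H0 (Krel t) (Krel s)) (.inr x) (.inr y) = (1, 1) := by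
  refine twoDist_eq_one_one (by simpa using hxy) ?_ ?_ <;>
    rcases x with x | x <;> rcases y with y | y <;> simp_all [glex3, Krel, eq_comm]

theorem IsWeaklyResolving.exists_inl_mem_or_mem_or_mem_glex3 (h12 : G 1 2) (h21 : G 2 1)
    {t s : ℕ} {S : Set (α ⊕ Fin t ⊕ Fin s)}
    (hS : IsWeaklyResolving (glex3 G H0 (Krel t) (Krel s)) S) (i : Fin t) (j : Fin s) :
    (∃ x, .inl x ∈ S) ∨ .inr (.inl i) ∈ S ∨ .inr (.inr j) ∈ S := by
  obtain ⟨w, hw, hsep⟩ := hS.exists_mem_twoDist_ne (u := .inr (.inl i)) (v := .inr (.inr j))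
    (by simp)
  rcases w with x | y
  · exact .inl ⟨x, hw⟩
  by_cases hyi : y = .inl i
  · exact .inr (.inl (hyi ▸ hw))
  by_cases hyj : y = .inr j
  · exact .inr (.inr (hyj ▸ hw))
  exact absurd ((twoDist_glex3_Krel_inr h12 h21 hyi).trans
    (twoDist_glex3_Krel_inr h12 h21 hyj).symm) hsep

theorem wdim_glex3_Krel_one_Krel_Krel (h01 : G 0 1) (h02 : ¬ G 0 2) (h12 : G 1 2)
    (h21 : G 2 1) (h20 : G 2 0) {t s : ℕ} (ht : 0 < t) (hs : 0 < s) :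
    wdim (glex3 G (Krel 1) (Krel t) (Krel s)) = s + t - 1 := by
  set b₀ : Fin 1 ⊕ Fin t ⊕ Fin s := .inr (.inl ⟨0, ht⟩)
  set c₀ : Fin 1 ⊕ Fin t ⊕ Fin s := .inr (.inr ⟨0, hs⟩)
  have hcard : #({b₀, c₀}ᶜ : Finset _) = s + t - 1 := by
    rw [card_compl, card_pair (by simp [b₀, c₀])]
    simp only [Fintype.card_sum, Fintype.card_fin]
    omega
  rw [← hcard]
  refine wdim_eq_of_isWeaklyResolving ?_ fun T hT => hcard ▸ ?_
  · refine isWeaklyResolving_of_notMem_eq_or_eq (glex3_Krel_adj_or_adj h01 h12 h20)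
      (u := b₀) (v := c₀) (w := .inl 0) (fun x hx => by simpa [or_iff_not_imp_right] using hx)
      (by simp [b₀, c₀]) (twoDist_glex3_inl_mid_ne_inl_right h01 h02 _ _ _)
  · have := card_add_card_sub_one_le_of_forall_mem_or_mem
      (fun i i' hii' => hT.mem_or_mem_of_isDigraphAuto_swap (by simpa using hii')
        (isDigraphAuto_swap_glex3_Krel_mid i i'))
      (fun j j' hjj' => hT.mem_or_mem_of_isDigraphAuto_swap (by simpa using hjj')
        (isDigraphAuto_swap_glex3_Krel_right j j'))
      (hT.exists_inl_mem_or_mem_or_mem_glex3 h12 h21)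
    simpa [add_comm] using this

end Glex3

/-- Lemma 4.3. `dim(G_i[K_1, K_t, K_s]) = s + t - 1` for `i = 1, 2`. -/
theorem dim_glex_K1_Kt_Ks (t s : ℕ) (ht : 0 < t) (hs : 0 < s) :
    wdim (glex3 G1rel (Krel 1) (Krel t) (Krel s)) = s + t - 1 ∧
    wdim (glex3 G2rel (Krel 1) (Krel t) (Krel s)) = s + t - 1 := by
  constructor <;> refine wdim_glex3_Krel_one_Krel_Krel ?_ ?_ ?_ ?_ ?_ ht hs <;>
    simp [G1rel, G2rel]
end
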